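/- arXiv:2402.12357 — 4 statements merged into one kernel-verified Lean document; each statement's English description precedes it below -/
import Mathlib

section
/- Let p₁, …, pₙ (n ≥ 4) be a concave chain, and let w₁ = p_i and w₂ = p_j with i < j be two of its points. If p_s, p_{s+1} are two consecutive chain points with {s, s+1} ∩ {i, j} = ∅, then the four points w₁, w₂, p_s, p_{s+1} are in convex position with w₁ and w₂ adjacent on their convex hull (i.e., the segment w₁w₂ is an edge of the convex hull of the four points). -/
/-- Orientation test: positive iff `a b c` is a left turn. -/
def cross (a b c : ℝ × ℝ) : ℝ :=
  (b.1 - a.1) * (c.2 - a.2) - (b.2 - a.2) * (c.1 - a.1)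

lemma cross_cyc (x y z : ℝ × ℝ) : cross x y z = cross y z x := by unfold cross; ring
lemma cross_swap23 (x y z : ℝ × ℝ) : cross x y z = -cross x z y := by unfold cross; ring
lemma cross_self1 (x y : ℝ × ℝ) : cross x y x = 0 := by unfold cross; ring
lemma cross_self2 (x y : ℝ × ℝ) : cross x y y = 0 := by unfold cross; ring

/-- slope of the chord from `p a` to `p b` -/
noncomputable def sl (p : ℕ → ℝ × ℝ) (a b : ℕ) : ℝ :=
  ((p b).2 - (p a).2) / ((p b).1 - (p a).1)

lemma slope_between (x1 y1 x2 y2 x3 y3 : ℝ) (h12 : x1 < x2) (h23 : x2 < x3)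
    (h : (y2 - y1) / (x2 - x1) < (y3 - y2) / (x3 - x2)) :
    (y2 - y1) / (x2 - x1) < (y3 - y1) / (x3 - x1) ∧
    (y3 - y1) / (x3 - x1) < (y3 - y2) / (x3 - x2) := by
  rw [div_lt_div_iff₀ (by linarith) (by linarith)] at h
  constructor
  · rw [div_lt_div_iff₀ (by linarith) (by linarith)]; nlinarith
  · rw [div_lt_div_iff₀ (by linarith) (by linarith)]; nlinarith

lemma cross_of_slope (p : ℕ → ℝ × ℝ) (a b c : ℕ)
    (h1 : (p a).1 < (p b).1) (h2 : (p b).1 < (p c).1)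
    (h : sl p a b < sl p b c) : 0 < cross (p a) (p b) (p c) := by
  unfold sl at h
  rw [div_lt_div_iff₀ (by linarith) (by linarith)] at h
  unfold cross; nlinarith

lemma slope_of_cross (p : ℕ → ℝ × ℝ) (a b c : ℕ)
    (h1 : (p a).1 < (p b).1) (h2 : (p b).1 < (p c).1)
    (h : 0 < cross (p a) (p b) (p c)) : sl p a b < sl p b c := by
  unfold cross at h
  unfold sl
  rw [div_lt_div_iff₀ (by linarith) (by linarith)]
  nlinarith

/-- On a concave chain every ordered triple is a left turn. -/
lemma chain_cross (n : ℕ) (p : ℕ → ℝ × ℝ)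
    (hx : ∀ i j, i < j → j < n → (p i).1 < (p j).1)
    (hconc : ∀ i, i + 2 < n → 0 < cross (p i) (p (i + 1)) (p (i + 2))) :
    ∀ a b c, a < b → b < c → c < n → 0 < cross (p a) (p b) (p c) := by
  have hS : ∀ k, k + 2 < n → sl p k (k+1) < sl p (k+1) (k+2) := by
    intro k hk
    exact slope_of_cross p k (k+1) (k+2)
      (hx _ _ (by omega) (by omega)) (hx _ _ (by omega) (by omega)) (hconc k hk)
  have hUpper : ∀ a m, a + m + 1 < n → sl p a (a+m+1) ≤ sl p (a+m) (a+m+1) := by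
    intro a m
    induction m with
    | zero => intro _; simp
    | succ m ih =>
      intro h
      have ih' := ih (by omega)
      have hSm := hS (a+m) (by omega)
      have hlt : sl p a (a+m+1) < sl p (a+m+1) (a+m+2) := by
        calc sl p a (a+m+1) ≤ sl p (a+m) (a+m+1) := ih'
        _ < sl p (a+m+1) (a+m+2) := hSm
      have := (slope_between (p a).1 (p a).2 (p (a+m+1)).1 (p (a+m+1)).2
        (p (a+m+2)).1 (p (a+m+2)).2
        (hx _ _ (by omega) (by omega)) (hx _ _ (by omega) (by omega)) hlt).2
      have e1 : a + (m+1) + 1 = a + m + 2 := by omega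
      have e2 : a + (m+1) = a + m + 1 := by omega
      rw [e1, e2]
      exact le_of_lt this
  have hLower : ∀ a m, a + m + 1 < n → sl p a (a+1) ≤ sl p a (a+m+1) := by
    intro a m
    induction m with
    | zero => intro _; simp
    | succ m ih =>
      intro h
      have ih' := ih (by omega)
      have hU := hUpper a m (by omega)
      have hSm := hS (a+m) (by omega)
      have hlt : sl p a (a+m+1) < sl p (a+m+1) (a+m+2) := lt_of_le_of_lt hU hSm
      have := (slope_between (p a).1 (p a).2 (p (a+m+1)).1 (p (a+m+1)).2
        (p (a+m+2)).1 (p (a+m+2)).2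
        (hx _ _ (by omega) (by omega)) (hx _ _ (by omega) (by omega)) hlt).1
      have e1 : a + (m+1) + 1 = a + m + 2 := by omega
      rw [e1]
      have h2 : sl p a (a+m+1) < sl p a (a+m+2) := this
      linarith
  intro a b c hab hbc hcn
  obtain ⟨m1, rfl⟩ : ∃ m1, b = a + m1 + 1 := ⟨b - a - 1, by omega⟩
  obtain ⟨m2, rfl⟩ : ∃ m2, c = (a + m1 + 1) + m2 + 1 := ⟨c - (a+m1+1) - 1, by omega⟩
  apply cross_of_slope p _ _ _ (hx _ _ (by omega) (by omega)) (hx _ _ (by omega) (by omega))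
  have h1 := hUpper a m1 (by omega)
  have h2 := hS (a + m1) (by omega)
  have h3 := hLower (a + m1 + 1) m2 (by omega)
  calc sl p a (a+m1+1) ≤ sl p (a+m1) (a+m1+1) := h1
    _ < sl p (a+m1+1) (a+m1+2) := h2
    _ = sl p (a+m1+1) ((a+m1+1)+1) := by norm_num
    _ ≤ sl p (a+m1+1) ((a+m1+1)+m2+1) := h3

lemma out_of_hull (u v q a b c : ℝ × ℝ)
    (ha : 0 ≤ cross u v a) (hb : 0 ≤ cross u v b) (hc : 0 ≤ cross u v c)
    (hq : cross u v q < 0) : q ∉ convexHull ℝ ({a, b, c} : Set (ℝ × ℝ)) := by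
  intro hmem
  have hsub : convexHull ℝ ({a, b, c} : Set (ℝ × ℝ)) ⊆ {x | 0 ≤ cross u v x} := by
    apply convexHull_min
    · intro x hx
      simp only [Set.mem_insert_iff, Set.mem_singleton_iff] at hx
      rcases hx with rfl | rfl | rfl <;> assumption
    · intro x hxm y hym α β hα hβ hαβ
      simp only [Set.mem_setOf_eq] at *
      have key : cross u v (α • x + β • y) = α * cross u v x + β * cross u v y := by
        have hx1 : (α • x + β • y).1 = α * x.1 + β * y.1 := rfl
        have hx2 : (α • x + β • y).2 = α * x.2 + β * y.2 := rfl
        have hb' : β = 1 - α := by linarith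
        subst hb'
        simp only [cross, hx1, hx2]; ring
      rw [key]
      have := mul_nonneg hα hxm
      have := mul_nonneg hβ hym
      linarith
  have := hsub hmem
  simp only [Set.mem_setOf_eq] at this
  linarith

lemma quadA (A B C D : ℝ × ℝ)
    (h1 : 0 < cross A B C) (h2 : 0 < cross A B D)
    (h3 : 0 < cross A C D) (h4 : 0 < cross B C D) :
    A ∉ convexHull ℝ ({B, C, D} : Set (ℝ × ℝ)) ∧
    B ∉ convexHull ℝ ({A, C, D} : Set (ℝ × ℝ)) ∧
    C ∉ convexHull ℝ ({A, B, D} : Set (ℝ × ℝ)) ∧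
    D ∉ convexHull ℝ ({A, B, C} : Set (ℝ × ℝ)) := by
  refine ⟨out_of_hull D B A B C D ?_ ?_ ?_ ?_, out_of_hull A C B A C D ?_ ?_ ?_ ?_,
    out_of_hull B D C A B D ?_ ?_ ?_ ?_, out_of_hull C A D A B C ?_ ?_ ?_ ?_⟩
  · exact le_of_eq (cross_self2 D B).symm
  · have e : cross D B C = cross B C D := by rw [cross_cyc]
    linarith
  · exact le_of_eq (cross_self1 D B).symm
  · have e1 : cross D B A = cross B A D := cross_cyc D B A
    have e2 : cross B A D = -cross B D A := cross_swap23 B A D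
    have e3 : cross B D A = cross A B D := (cross_cyc A B D).symm
    linarith
  · exact le_of_eq (cross_self1 A C).symm
  · exact le_of_eq (cross_self2 A C).symm
  · linarith
  · have e : cross A C B = -cross A B C := cross_swap23 A C B
    linarith
  · have e1 : cross B D A = cross A B D := (cross_cyc A B D).symm
    linarith
  · exact le_of_eq (cross_self1 B D).symm
  · exact le_of_eq (cross_self2 B D).symm
  · have e : cross B D C = -cross B C D := cross_swap23 B D C
    linarith
  · exact le_of_eq (cross_self2 C A).symm
  · have e : cross C A B = cross A B C := cross_cyc C A B
    linarith
  · exact le_of_eq (cross_self1 C A).symm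
  · have e1 : cross C A D = -cross C D A := cross_swap23 C A D
    have e2 : cross C D A = cross A C D := by rw [cross_cyc A C D, cross_cyc C D A]
    linarith

lemma set_rot (x y z : ℝ × ℝ) : ({x, y, z} : Set (ℝ × ℝ)) = {y, z, x} := by
  ext w; simp only [Set.mem_insert_iff, Set.mem_singleton_iff]; tauto

lemma set_swap23 (x y z : ℝ × ℝ) : ({x, y, z} : Set (ℝ × ℝ)) = {x, z, y} := by
  ext w; simp only [Set.mem_insert_iff, Set.mem_singleton_iff]; tauto

/-- On a concave chain (increasing `x`, right turns), two wing points `p i, p j`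
together with two consecutive chain points `p s, p (s+1)` distinct from the wings
are in convex position, and the two consecutive points lie strictly on the same
side of the line through the wings (so the wing segment is an edge of the convex
hull of the four points). -/
theorem concave_chain_wings_hull_edge
    (n : ℕ) (hn : 4 ≤ n) (p : ℕ → ℝ × ℝ)
    (hx : ∀ i j, i < j → j < n → (p i).1 < (p j).1)
    (hconc : ∀ i, i + 2 < n → 0 < cross (p i) (p (i + 1)) (p (i + 2)))
    (i j s : ℕ) (hij : i < j) (hjn : j < n) (hsn : s + 1 < n)
    (hsi : s ≠ i) (hsj : s ≠ j) (hs1i : s + 1 ≠ i) (hs1j : s + 1 ≠ j) :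
    (p i ∉ convexHull ℝ ({p j, p s, p (s + 1)} : Set (ℝ × ℝ)) ∧
     p j ∉ convexHull ℝ ({p i, p s, p (s + 1)} : Set (ℝ × ℝ)) ∧
     p s ∉ convexHull ℝ ({p i, p j, p (s + 1)} : Set (ℝ × ℝ)) ∧
     p (s + 1) ∉ convexHull ℝ ({p i, p j, p s} : Set (ℝ × ℝ))) ∧
    0 < cross (p i) (p j) (p s) * cross (p i) (p j) (p (s + 1)) := by
  have key := chain_cross n p hx hconc
  have hcase : s + 1 < i ∨ (i < s ∧ s + 1 < j) ∨ j < s := by omega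
  rcases hcase with hc | ⟨hc1, hc2⟩ | hc
  · -- s < s+1 < i < j
    have k1 := key s (s+1) i (by omega) (by omega) (by omega)
    have k2 := key s (s+1) j (by omega) (by omega) hjn
    have k3 := key s i j (by omega) hij hjn
    have k4 := key (s+1) i j (by omega) hij hjn
    obtain ⟨q1, q2, q3, q4⟩ := quadA (p s) (p (s+1)) (p i) (p j) k1 k2 k3 k4
    constructor
    · refine ⟨?_, ?_, ?_, ?_⟩
      · rw [set_rot]; exact q3
      · rw [set_rot]; exact q4
      · rw [set_rot, set_rot]; exact q1
      · rw [set_rot, set_rot]; exact q2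
    · have e1 : cross (p s) (p i) (p j) = cross (p i) (p j) (p s) := cross_cyc _ _ _
      have e2 : cross (p (s+1)) (p i) (p j) = cross (p i) (p j) (p (s+1)) := cross_cyc _ _ _
      nlinarith
  · -- i < s < s+1 < j
    have k1 := key i s (s+1) hc1 (by omega) (by omega)
    have k2 := key i s j hc1 (by omega) hjn
    have k3 := key i (s+1) j (by omega) hc2 hjn
    have k4 := key s (s+1) j (by omega) hc2 hjn
    obtain ⟨q1, q2, q3, q4⟩ := quadA (p i) (p s) (p (s+1)) (p j) k1 k2 k3 k4
    constructor
    · refine ⟨?_, ?_, ?_, ?_⟩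
      · rw [set_rot]; exact q1
      · exact q4
      · rw [set_swap23]; exact q2
      · rw [set_swap23]; exact q3
    · have e1 : cross (p i) (p j) (p s) = -cross (p i) (p s) (p j) := cross_swap23 _ _ _
      have e2 : cross (p i) (p j) (p (s+1)) = -cross (p i) (p (s+1)) (p j) := cross_swap23 _ _ _
      nlinarith
  · -- i < j < s < s+1
    have k1 := key i j s hij hc (by omega)
    have k2 := key i j (s+1) hij (by omega) hsn
    have k3 := key i s (s+1) (by omega) (by omega) hsn
    have k4 := key j s (s+1) hc (by omega) hsn
    obtain ⟨q1, q2, q3, q4⟩ := quadA (p i) (p j) (p s) (p (s+1)) k1 k2 k3 k4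
    exact ⟨⟨q1, q2, q3, q4⟩, mul_pos k1 k2⟩
end

section
/- Let P be a point set in general position. For any point p of P interior to the convex hull of P, there exist three points a, b, c of P such that p lies strictly inside triangle abc and no other point of P lies inside triangle abc. -/
noncomputable def triBasis {a b c : ℝ × ℝ} (h : ¬ Collinear ℝ ({a,b,c} : Set (ℝ×ℝ))) :
    AffineBasis (Fin 3) ℝ (ℝ × ℝ) :=
  ⟨![a,b,c], affineIndependent_iff_not_collinear_set.2 h, by
    rw [AffineIndependent.affineSpan_eq_top_iff_card_eq_finrank_add_one
      (affineIndependent_iff_not_collinear_set.2 h)]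
    simp⟩

lemma range_triBasis {a b c : ℝ × ℝ} (h : ¬ Collinear ℝ ({a,b,c} : Set (ℝ×ℝ))) :
    Set.range (triBasis h) = {a, b, c} := by
  show Set.range ![a,b,c] = _
  simp [Matrix.range_cons, Matrix.range_empty]
  ext x; simp; tauto

lemma mem_interior_tri {a b c : ℝ × ℝ} (h : ¬ Collinear ℝ ({a,b,c} : Set (ℝ×ℝ))) {q : ℝ × ℝ} :
    q ∈ interior (convexHull ℝ ({a,b,c} : Set (ℝ×ℝ))) ↔ ∀ i, 0 < (triBasis h).coord i q := by
  rw [← range_triBasis h, AffineBasis.interior_convexHull]; rfl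

lemma mem_hull_tri {a b c : ℝ × ℝ} (h : ¬ Collinear ℝ ({a,b,c} : Set (ℝ×ℝ))) {q : ℝ × ℝ} :
    q ∈ convexHull ℝ ({a,b,c} : Set (ℝ×ℝ)) ↔ ∀ i, 0 ≤ (triBasis h).coord i q := by
  rw [← range_triBasis h, AffineBasis.convexHull_eq_nonneg_coord]; rfl

@[simp] lemma triBasis_apply {a b c : ℝ × ℝ} (h : ¬ Collinear ℝ ({a,b,c} : Set (ℝ×ℝ)))
    (i : Fin 3) : (triBasis h) i = ![a,b,c] i := rfl

lemma tri_coord_eq {a b c : ℝ × ℝ} (h : ¬ Collinear ℝ ({a,b,c} : Set (ℝ×ℝ)))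
    (w : Fin 3 → ℝ) (hw : w 0 + w 1 + w 2 = 1) {q : ℝ × ℝ}
    (hq : q = w 0 • a + w 1 • b + w 2 • c) (i : Fin 3) :
    (triBasis h).coord i q = w i := by
  have hw' : ∑ j, w j = 1 := by rw [Fin.sum_univ_three]; exact hw
  have hq' : q = Finset.univ.affineCombination ℝ (triBasis h) w := by
    rw [Finset.univ.affineCombination_eq_linear_combination _ _ hw', Fin.sum_univ_three]
    simpa using hq
  rw [hq']
  exact (triBasis h).coord_apply_combination_of_mem (Finset.mem_univ i) hw'

lemma tri_combo {a b c : ℝ × ℝ} (h : ¬ Collinear ℝ ({a,b,c} : Set (ℝ×ℝ))) (q : ℝ × ℝ) :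
    q = (triBasis h).coord 0 q • a + (triBasis h).coord 1 q • b + (triBasis h).coord 2 q • c := by
  have := (triBasis h).linear_combination_coord_eq_self q
  rw [Fin.sum_univ_three] at this
  simpa using this.symm

lemma tri_coord_sum {a b c : ℝ × ℝ} (h : ¬ Collinear ℝ ({a,b,c} : Set (ℝ×ℝ))) (q : ℝ × ℝ) :
    (triBasis h).coord 0 q + (triBasis h).coord 1 q + (triBasis h).coord 2 q = 1 := by
  have := (triBasis h).sum_coord_apply_eq_one q
  rwa [Fin.sum_univ_three] at this

lemma vertices_not_mem_interior {a b c : ℝ × ℝ} (h : ¬ Collinear ℝ ({a,b,c} : Set (ℝ×ℝ))) :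
    a ∉ interior (convexHull ℝ ({a,b,c} : Set (ℝ×ℝ))) ∧
    b ∉ interior (convexHull ℝ ({a,b,c} : Set (ℝ×ℝ))) ∧
    c ∉ interior (convexHull ℝ ({a,b,c} : Set (ℝ×ℝ))) := by
  refine ⟨fun hmem => ?_, fun hmem => ?_, fun hmem => ?_⟩
  · have := (mem_interior_tri h).1 hmem 1
    rw [tri_coord_eq h ![1,0,0] (by norm_num [Matrix.cons_val_two]) (by simp) 1] at this
    simp at this
  · have := (mem_interior_tri h).1 hmem 0
    rw [tri_coord_eq h ![0,1,0] (by norm_num [Matrix.cons_val_two]) (by simp) 0] at this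
    simp at this
  · have := (mem_interior_tri h).1 hmem 0
    rw [tri_coord_eq h ![0,0,1] (by norm_num [Matrix.cons_val_two]) (by simp) 0] at this
    simp at this

/-- If the coordinate ratio at index 0 is strictly smallest, `p` is inside triangle `x b c`. -/
lemma split_aux {a b c x p : ℝ × ℝ} (hxbc : ¬ Collinear ℝ ({x,b,c} : Set (ℝ×ℝ)))
    (π0 π1 π2 ξ0 ξ1 ξ2 : ℝ) (hπ0 : 0 < π0) (hπ1 : 0 < π1) (hπ2 : 0 < π2)
    (hξ0 : 0 < ξ0) (hξ1 : 0 < ξ1) (hξ2 : 0 < ξ2)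
    (hπs : π0 + π1 + π2 = 1) (hξs : ξ0 + ξ1 + ξ2 = 1)
    (hpe : p = π0 • a + π1 • b + π2 • c) (hxe : x = ξ0 • a + ξ1 • b + ξ2 • c)
    (h01 : π0 / ξ0 < π1 / ξ1) (h02 : π0 / ξ0 < π2 / ξ2) :
    p ∈ interior (convexHull ℝ ({x, b, c} : Set (ℝ×ℝ))) := by
  set s : ℝ := π0 / ξ0 with hs
  set t : ℝ := π1 - s * ξ1 with ht
  set u : ℝ := π2 - s * ξ2 with hu
  have hξ0' : ξ0 ≠ 0 := ne_of_gt hξ0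
  have hs0 : 0 < s := div_pos hπ0 hξ0
  have ht0 : 0 < t := by
    have h : s * ξ1 < (π1 / ξ1) * ξ1 := mul_lt_mul_of_pos_right h01 hξ1
    rw [div_mul_cancel₀ _ (ne_of_gt hξ1)] at h
    simpa [ht] using sub_pos.2 h
  have hu0 : 0 < u := by
    have h : s * ξ2 < (π2 / ξ2) * ξ2 := mul_lt_mul_of_pos_right h02 hξ2
    rw [div_mul_cancel₀ _ (ne_of_gt hξ2)] at h
    simpa [hu] using sub_pos.2 h
  have e0 : s * ξ0 = π0 := div_mul_cancel₀ _ hξ0'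
  have h3 : s * ξ0 + s * ξ1 + s * ξ2 = s := by
    rw [← mul_add, ← mul_add, hξs, mul_one]
  have hsum : s + t + u = 1 := by rw [ht, hu]; linarith [e0, h3, hπs]
  have hcombo : p = s • x + t • b + u • c := by
    have e1 : s * ξ1 + t = π1 := by rw [ht]; ring
    have e2 : s * ξ2 + u = π2 := by rw [hu]; ring
    rw [hxe, hpe, ← e0, ← e1, ← e2]
    module
  rw [mem_interior_tri hxbc]
  intro i
  rw [tri_coord_eq hxbc ![s,t,u] (by simpa using hsum) hcombo i]
  fin_cases i <;> simpa using by assumption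

/-- A tie in the first two coordinate ratios forces `p` to be collinear with `x` and `c`. -/
lemma split_tie {a b c x p : ℝ × ℝ}
    (π0 π1 π2 ξ0 ξ1 ξ2 : ℝ) (hξ0 : 0 < ξ0) (hξ1 : 0 < ξ1) (hξ2 : 0 < ξ2)
    (hπs : π0 + π1 + π2 = 1) (hξs : ξ0 + ξ1 + ξ2 = 1)
    (hpe : p = π0 • a + π1 • b + π2 • c) (hxe : x = ξ0 • a + ξ1 • b + ξ2 • c)
    (h01 : π0 / ξ0 = π1 / ξ1) :
    Collinear ℝ ({p, x, c} : Set (ℝ×ℝ)) := by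
  set s : ℝ := π0 / ξ0 with hs
  set u : ℝ := π2 - s * ξ2 with hu
  have e0 : s * ξ0 = π0 := div_mul_cancel₀ _ (ne_of_gt hξ0)
  have e1 : s * ξ1 = π1 := by
    rw [h01]; exact div_mul_cancel₀ _ (ne_of_gt hξ1)
  have h3 : s * ξ0 + s * ξ1 + s * ξ2 = s := by
    rw [← mul_add, ← mul_add, hξs, mul_one]
  have hsum : s + u = 1 := by rw [hu]; linarith [e0, e1, h3, hπs]
  have hcombo : p = s • x + u • c := by
    have e2 : s * ξ2 + u = π2 := by rw [hu]; ring
    rw [hxe, hpe, ← e0, ← e1, ← e2]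
    module
  have hline : p = AffineMap.lineMap x c u := by
    rw [AffineMap.lineMap_apply_module, hcombo]
    have h4 : (1 : ℝ) - u = s := by linarith
    rw [h4]
  have hmem : p ∈ line[ℝ, x, c] := hline ▸ AffineMap.lineMap_mem_affineSpan_pair u x c
  exact collinear_insert_of_mem_affineSpan_pair hmem

lemma interior_tri_subset {a b c x u v : ℝ × ℝ}
    (hx : x ∈ convexHull ℝ ({a,b,c} : Set (ℝ×ℝ)))
    (hu : u ∈ convexHull ℝ ({a,b,c} : Set (ℝ×ℝ)))
    (hv : v ∈ convexHull ℝ ({a,b,c} : Set (ℝ×ℝ))) :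
    interior (convexHull ℝ ({x,u,v} : Set (ℝ×ℝ))) ⊆
      interior (convexHull ℝ ({a,b,c} : Set (ℝ×ℝ))) := by
  apply interior_mono
  apply convexHull_min _ (convex_convexHull ℝ _)
  intro y hy
  simp only [Set.mem_insert_iff, Set.mem_singleton_iff] at hy
  rcases hy with rfl | rfl | rfl <;> assumption

lemma exists_containing_triangle
    (P : Finset (ℝ × ℝ))
    (hgp : ∀ x ∈ P, ∀ y ∈ P, ∀ z ∈ P, x ≠ y → y ≠ z → x ≠ z →
      ¬ Collinear ℝ ({x, y, z} : Set (ℝ × ℝ)))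
    (p : ℝ × ℝ) (hp : p ∈ P)
    (hpin : p ∈ interior (convexHull ℝ (P : Set (ℝ × ℝ)))) :
    ∃ a ∈ P, ∃ b ∈ P, ∃ c ∈ P, a ≠ p ∧ b ≠ p ∧ c ≠ p ∧ a ≠ b ∧ b ≠ c ∧ a ≠ c ∧
      p ∈ interior (convexHull ℝ ({a, b, c} : Set (ℝ × ℝ))) := by
  classical
  set S : Set (ℝ × ℝ) := (↑P : Set (ℝ × ℝ)) \ {p} with hSdef
  -- the ball inside the hull
  obtain ⟨δ, hδ, hball⟩ := Metric.mem_nhds_iff.1 (isOpen_interior.mem_nhds hpin)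
  have hballhull : Metric.ball p δ ⊆ convexHull ℝ (↑P : Set (ℝ × ℝ)) :=
    hball.trans interior_subset
  -- S is nonempty
  have hSne : S.Nonempty := by
    by_contra hne
    rw [Set.not_nonempty_iff_eq_empty] at hne
    have hPp : (↑P : Set (ℝ × ℝ)) = {p} := by
      ext x
      simp only [Set.mem_singleton_iff]
      constructor
      · intro hx
        by_contra hxp
        exact (Set.eq_empty_iff_forall_notMem.1 hne x) ⟨hx, hxp⟩
      · rintro rfl; exact hp
    rw [hPp, convexHull_singleton, interior_singleton] at hpin
    exact hpin
  -- p is in the convex hull of S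
  have hpS : p ∈ convexHull ℝ S := by
    by_contra hnot
    have hSfin : S.Finite := P.finite_toSet.subset Set.diff_subset
    obtain ⟨f, u, hfu, hub⟩ :=
      geometric_hahn_banach_point_closed (convex_convexHull ℝ S)
        (hSfin.isClosed_convexHull ℝ) hnot
    have hhalf : convexHull ℝ (↑P : Set (ℝ × ℝ)) ⊆ {w | f p ≤ f w} := by
      apply convexHull_min _ (convex_halfSpace_ge (f.toLinearMap.isLinear) (f p))
      intro x hx
      by_cases hxp : x = p
      · subst hxp; exact Set.mem_setOf.2 le_rfl
      · have hxS : x ∈ S := ⟨hx, by simpa using hxp⟩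
        exact le_of_lt (hfu.trans (hub x (subset_convexHull ℝ S hxS)))
    obtain ⟨b₀, hb₀⟩ := hSne
    have hfb₀ : f p < f b₀ := hfu.trans (hub b₀ (subset_convexHull ℝ S hb₀))
    set z : ℝ × ℝ := b₀ - p with hz
    have hfz : 0 < f z := by simpa [hz, map_sub] using sub_pos.2 hfb₀
    have hz0 : z ≠ 0 := fun h => by simp [h] at hfz
    have hnz : 0 < ‖z‖ := norm_pos_iff.2 hz0
    set t : ℝ := δ / (2 * ‖z‖) with htdef
    have ht : 0 < t := div_pos hδ (by positivity)
    have hw : p - t • z ∈ Metric.ball p δ := by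
      rw [Metric.mem_ball, dist_eq_norm]
      have : p - t • z - p = -(t • z) := by abel
      rw [this, norm_neg, norm_smul, Real.norm_eq_abs, abs_of_pos ht, htdef]
      have hne' : ‖z‖ ≠ 0 := ne_of_gt hnz
      have heq : δ / (2 * ‖z‖) * ‖z‖ = δ / 2 := by field_simp
      rw [heq]; linarith
    have := hhalf (hballhull hw)
    simp only [Set.mem_setOf_eq, map_sub, map_smul] at this
    rw [smul_eq_mul] at this
    nlinarith [mul_pos ht hfz]
  -- Carathéodory with positive weights
  obtain ⟨ι, hfin, z, w, hzS, hai, hwpos, hwsum, hwcomb⟩ :=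
    eq_pos_convex_span_of_mem_convexHull hpS
  have hcard : Fintype.card ι ≤ 3 := by
    have h1 := hai.card_le_finrank_succ
    have h2 : Module.finrank ℝ ↥(vectorSpan ℝ (Set.range z)) ≤ Module.finrank ℝ (ℝ × ℝ) :=
      Submodule.finrank_le _
    have h3 : Module.finrank ℝ (ℝ × ℝ) = 2 := by simp
    omega
  set n := Fintype.card ι with hn
  have e : ι ≃ Fin n := Fintype.equivFin ι
  set z' : Fin n → ℝ × ℝ := z ∘ e.symm with hz'
  set w' : Fin n → ℝ := w ∘ e.symm with hw'
  have hsum' : ∑ j, w' j = 1 := by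
    rw [hw']; rw [← hwsum]; exact Fintype.sum_equiv e.symm _ _ (fun i => rfl)
  have hcomb' : ∑ j, w' j • z' j = p := by
    rw [hw', hz']; rw [← hwcomb]; exact Fintype.sum_equiv e.symm _ _ (fun i => rfl)
  have hz'S : ∀ j, z' j ∈ S := fun j => hzS (Set.mem_range_self _)
  have hz'P : ∀ j, z' j ∈ P := fun j => ((Set.mem_diff _).1 (hz'S j)).1
  have hz'p : ∀ j, z' j ≠ p := fun j => by
    have := ((Set.mem_diff _).1 (hz'S j)).2; simpa using this
  have hz'inj : Function.Injective z' := hai.injective.comp e.symm.injective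
  have hw'pos : ∀ j, 0 < w' j := fun j => hwpos _
  interval_cases n
  · simp at hsum'
  · rw [Fin.sum_univ_one] at hsum' hcomb'
    rw [hsum', one_smul] at hcomb'
    exact absurd hcomb' (hz'p 0)
  · rw [Fin.sum_univ_two] at hsum' hcomb'
    have h1 : w' 0 = 1 - w' 1 := by linarith
    have hline : p = AffineMap.lineMap (z' 0) (z' 1) (w' 1) := by
      rw [AffineMap.lineMap_apply_module, ← hcomb', h1]
    have hcol : Collinear ℝ ({p, z' 0, z' 1} : Set (ℝ × ℝ)) :=
      collinear_insert_of_mem_affineSpan_pair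
        (hline ▸ AffineMap.lineMap_mem_affineSpan_pair _ _ _)
    exact absurd hcol (hgp p hp (z' 0) (hz'P 0) (z' 1) (hz'P 1)
      (Ne.symm (hz'p 0)) (fun h => absurd (hz'inj h) (by decide))
      (Ne.symm (hz'p 1)))
  · rw [Fin.sum_univ_three] at hsum' hcomb'
    have h01 : z' 0 ≠ z' 1 := fun h => absurd (hz'inj h) (by decide)
    have h12 : z' 1 ≠ z' 2 := fun h => absurd (hz'inj h) (by decide)
    have h02 : z' 0 ≠ z' 2 := fun h => absurd (hz'inj h) (by decide)
    have hnc : ¬ Collinear ℝ ({z' 0, z' 1, z' 2} : Set (ℝ × ℝ)) :=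
      hgp _ (hz'P 0) _ (hz'P 1) _ (hz'P 2) h01 h12 h02
    refine ⟨z' 0, hz'P 0, z' 1, hz'P 1, z' 2, hz'P 2, hz'p 0, hz'p 1, hz'p 2,
      h01, h12, h02, ?_⟩
    rw [mem_interior_tri hnc]
    intro i
    rw [tri_coord_eq hnc ![w' 0, w' 1, w' 2] (by simpa using hsum') hcomb'.symm i]
    fin_cases i <;> simpa using hw'pos _

/-- For a finite planar point set `P` in general position and a point `p ∈ P`
interior to the convex hull of `P`, there is an empty triangle of points of `P`
containing `p`: three points `a, b, c` of `P \ {p}` such that `p` lies strictly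
inside triangle `abc` and no other point of `P` lies inside triangle `abc`. -/
theorem empty_containing_triangle_exists
    (P : Finset (ℝ × ℝ))
    (hgp : ∀ x ∈ P, ∀ y ∈ P, ∀ z ∈ P, x ≠ y → y ≠ z → x ≠ z →
      ¬ Collinear ℝ ({x, y, z} : Set (ℝ × ℝ)))
    (p : ℝ × ℝ) (hp : p ∈ P)
    (hpin : p ∈ interior (convexHull ℝ (P : Set (ℝ × ℝ)))) :
    ∃ a ∈ P, ∃ b ∈ P, ∃ c ∈ P, a ≠ p ∧ b ≠ p ∧ c ≠ p ∧ a ≠ b ∧ b ≠ c ∧ a ≠ c ∧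
      p ∈ interior (convexHull ℝ ({a, b, c} : Set (ℝ × ℝ))) ∧
      ∀ x ∈ P, x ≠ p → x ≠ a → x ≠ b → x ≠ c →
        x ∉ interior (convexHull ℝ ({a, b, c} : Set (ℝ × ℝ))) := by
  classical
  set T : Finset ((ℝ×ℝ) × (ℝ×ℝ) × (ℝ×ℝ)) := (P ×ˢ P ×ˢ P).filter
    (fun t => t.1 ≠ p ∧ t.2.1 ≠ p ∧ t.2.2 ≠ p ∧ t.1 ≠ t.2.1 ∧ t.2.1 ≠ t.2.2 ∧ t.1 ≠ t.2.2 ∧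
      p ∈ interior (convexHull ℝ ({t.1, t.2.1, t.2.2} : Set (ℝ×ℝ)))) with hT
  have hTne : T.Nonempty := by
    obtain ⟨a, ha, b, hb, c, hc, hap, hbp, hcp, hab, hbc, hac, hint⟩ :=
      exists_containing_triangle P hgp p hp hpin
    exact ⟨(a, b, c), by
      rw [hT, Finset.mem_filter, Finset.mem_product, Finset.mem_product]
      exact ⟨⟨ha, hb, hc⟩, hap, hbp, hcp, hab, hbc, hac, hint⟩⟩
  obtain ⟨t, htT, hmin⟩ := T.exists_min_image
    (fun t => (P.filter
      (· ∈ interior (convexHull ℝ ({t.1, t.2.1, t.2.2} : Set (ℝ×ℝ))))).card) hTne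
  obtain ⟨a, b, c⟩ := t
  rw [hT, Finset.mem_filter, Finset.mem_product, Finset.mem_product] at htT
  obtain ⟨⟨ha, hb, hc⟩, hap, hbp, hcp, hab, hbc, hac, hpint⟩ := htT
  refine ⟨a, ha, b, hb, c, hc, hap, hbp, hcp, hab, hbc, hac, hpint, ?_⟩
  intro x hxP hxp hxa hxb hxc hxint
  -- set up barycentric data
  have habc : ¬ Collinear ℝ ({a, b, c} : Set (ℝ×ℝ)) := hgp a ha b hb c hc hab hbc hac
  set B := triBasis habc with hB
  set π0 := B.coord 0 p; set π1 := B.coord 1 p; set π2 := B.coord 2 p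
  set ξ0 := B.coord 0 x; set ξ1 := B.coord 1 x; set ξ2 := B.coord 2 x
  have hπ : ∀ i, 0 < B.coord i p := (mem_interior_tri habc).1 hpint
  have hξ : ∀ i, 0 < B.coord i x := (mem_interior_tri habc).1 hxint
  have hπ0 : 0 < π0 := hπ 0
  have hπ1 : 0 < π1 := hπ 1
  have hπ2 : 0 < π2 := hπ 2
  have hξ0 : 0 < ξ0 := hξ 0
  have hξ1 : 0 < ξ1 := hξ 1
  have hξ2 : 0 < ξ2 := hξ 2
  have hπs : π0 + π1 + π2 = 1 := tri_coord_sum habc p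
  have hξs : ξ0 + ξ1 + ξ2 = 1 := tri_coord_sum habc x
  have hpe : p = π0 • a + π1 • b + π2 • c := tri_combo habc p
  have hxe : x = ξ0 • a + ξ1 • b + ξ2 • c := tri_combo habc x
  have hxbc : ¬ Collinear ℝ ({x, b, c} : Set (ℝ×ℝ)) := hgp x hxP b hb c hc hxb hbc hxc
  have hxac : ¬ Collinear ℝ ({x, a, c} : Set (ℝ×ℝ)) := hgp x hxP a ha c hc hxa hac hxc
  have hxab : ¬ Collinear ℝ ({x, a, b} : Set (ℝ×ℝ)) := hgp x hxP a ha b hb hxa hab hxb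
  have hpxa : ¬ Collinear ℝ ({p, x, a} : Set (ℝ×ℝ)) :=
    hgp p hp x hxP a ha (Ne.symm hxp) hxa (Ne.symm hap)
  have hpxb : ¬ Collinear ℝ ({p, x, b} : Set (ℝ×ℝ)) :=
    hgp p hp x hxP b hb (Ne.symm hxp) hxb (Ne.symm hbp)
  have hpxc : ¬ Collinear ℝ ({p, x, c} : Set (ℝ×ℝ)) :=
    hgp p hp x hxP c hc (Ne.symm hxp) hxc (Ne.symm hcp)
  -- once we have a strictly smaller containing triangle, we get a contradiction
  have hdescent : ∀ u v : ℝ × ℝ, u ∈ P → v ∈ P → u ≠ p → v ≠ p → x ≠ u → u ≠ v → x ≠ v →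
      u ∈ convexHull ℝ ({a,b,c} : Set (ℝ×ℝ)) → v ∈ convexHull ℝ ({a,b,c} : Set (ℝ×ℝ)) →
      ¬ Collinear ℝ ({x, u, v} : Set (ℝ×ℝ)) →
      p ∈ interior (convexHull ℝ ({x, u, v} : Set (ℝ×ℝ))) → False := by
    intro u v huP hvP hup hvp hxu huv hxv huh hvh hxuv hpnew
    have ht'T : (x, u, v) ∈ T := by
      rw [hT, Finset.mem_filter, Finset.mem_product, Finset.mem_product]
      exact ⟨⟨hxP, huP, hvP⟩, hxp, hup, hvp, hxu, huv, hxv, hpnew⟩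
    have hsub : interior (convexHull ℝ ({x,u,v} : Set (ℝ×ℝ))) ⊆
        interior (convexHull ℝ ({a,b,c} : Set (ℝ×ℝ))) :=
      interior_tri_subset (interior_subset hxint) huh hvh
    have hfsub : P.filter (· ∈ interior (convexHull ℝ ({x,u,v} : Set (ℝ×ℝ)))) ⊂
        P.filter (· ∈ interior (convexHull ℝ ({a,b,c} : Set (ℝ×ℝ)))) := by
      refine (Finset.ssubset_iff_of_subset
        (Finset.monotone_filter_right P (fun y _ hy => hsub hy))).2 ⟨x, ?_, ?_⟩
      · exact Finset.mem_filter.2 ⟨hxP, hxint⟩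
      · intro hmem
        exact (vertices_not_mem_interior hxuv).1 (Finset.mem_filter.1 hmem).2
    have := hmin (x, u, v) ht'T
    have hlt := Finset.card_lt_card hfsub
    simp only at this hlt
    omega
  have hah : a ∈ convexHull ℝ ({a,b,c} : Set (ℝ×ℝ)) := subset_convexHull ℝ _ (by simp)
  have hbh : b ∈ convexHull ℝ ({a,b,c} : Set (ℝ×ℝ)) := subset_convexHull ℝ _ (by simp)
  have hch : c ∈ convexHull ℝ ({a,b,c} : Set (ℝ×ℝ)) := subset_convexHull ℝ _ (by simp)
  -- case analysis on coordinate ratios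
  rcases lt_trichotomy (π0 / ξ0) (π1 / ξ1) with h01 | h01 | h01
  · rcases lt_trichotomy (π0 / ξ0) (π2 / ξ2) with h02 | h02 | h02
    · -- min at index 0 : triangle x b c
      exact hdescent b c hb hc hbp hcp hxb hbc hxc hbh hch hxbc
        (split_aux hxbc π0 π1 π2 ξ0 ξ1 ξ2 hπ0 hπ1 hπ2 hξ0 hξ1 hξ2 hπs hξs hpe hxe h01 h02)
    · -- tie 0 = 2 : p, x, b collinear
      refine hpxb (split_tie (a := a) (b := c) (c := b) (x := x) π0 π2 π1 ξ0 ξ2 ξ1 hξ0 hξ2 hξ1 (by linarith) (by linarith)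
        (by rw [hpe]; module) (by rw [hxe]; module) h02)
    · -- min at index 2 : triangle x a b
      exact hdescent a b ha hb hap hbp hxa hab hxb hah hbh hxab
        (split_aux (a := c) (b := a) (c := b) hxab π2 π0 π1 ξ2 ξ0 ξ1 hπ2 hπ0 hπ1 hξ2 hξ0 hξ1
          (by linarith) (by linarith)
          (by rw [hpe]; module) (by rw [hxe]; module) h02 (h02.trans h01))
  · -- tie 0 = 1 : p, x, c collinear
    exact hpxc (split_tie π0 π1 π2 ξ0 ξ1 ξ2 hξ0 hξ1 hξ2 hπs hξs hpe hxe h01)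
  · rcases lt_trichotomy (π1 / ξ1) (π2 / ξ2) with h12 | h12 | h12
    · -- min at index 1 : triangle x a c
      exact hdescent a c ha hc hap hcp hxa hac hxc hah hch hxac
        (split_aux (a := b) (b := a) (c := c) hxac π1 π0 π2 ξ1 ξ0 ξ2 hπ1 hπ0 hπ2 hξ1 hξ0 hξ2 (by linarith) (by linarith)
          (by rw [hpe]; module) (by rw [hxe]; module) h01 h12)
    · -- tie 1 = 2 : p, x, a collinear
      refine hpxa (split_tie (a := b) (b := c) (c := a) (x := x) π1 π2 π0 ξ1 ξ2 ξ0 hξ1 hξ2 hξ0 (by linarith) (by linarith)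
        (by rw [hpe]; module) (by rw [hxe]; module) h12)
    · -- min at index 2 : triangle x a b
      exact hdescent a b ha hb hap hbp hxa hab hxb hah hbh hxab
        (split_aux (a := c) (b := a) (c := b) hxab π2 π0 π1 ξ2 ξ0 ξ1 hπ2 hπ0 hπ1 hξ2 hξ0 hξ1
          (by linarith) (by linarith)
          (by rw [hpe]; module) (by rw [hxe]; module) (h12.trans h01) h12)
end

section
/- In a double chain P = P₁ ∪ P₂ (two concave chains facing each other whose chains do not cross the diagonals of the bounding 4-gon), no four points of a single chain form a dart: any dart among points of P either has its tip and tail on opposite chains (crossing dart) or has tip and tail consecutive on one chain (aligned dart). -/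
lemma cross_cyclic (a b c : ℝ × ℝ) : cross a b c = cross b c a := by unfold cross; ring
lemma cross_swap (a b c : ℝ × ℝ) : cross a b c = - cross a c b := by unfold cross; ring
lemma cross_swap12 (a b c : ℝ × ℝ) : cross b a c = - cross a b c := by unfold cross; ring
lemma cross_self_mid (a c : ℝ × ℝ) : cross a c a = 0 := by unfold cross; ring
lemma cross_self_right (a c : ℝ × ℝ) : cross a c c = 0 := by unfold cross; ring
lemma cross_vert₁ (c : ℝ) (x : ℝ × ℝ) : cross (c, 0) (c, 1) x = c - x.1 := by
  simp [cross]
lemma cross_vert₂ (c : ℝ) (x : ℝ × ℝ) : cross (c, 1) (c, 0) x = x.1 - c := by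
  simp [cross]
lemma cross_neg_y (a b c : ℝ × ℝ) :
    cross (a.1, -a.2) (b.1, -b.2) (c.1, -c.2) = - cross a b c := by
  simp [cross]; ring

lemma chain4 {a b c d : ℝ × ℝ} (h1 : a.1 < b.1) (h2 : b.1 < c.1) (h3 : c.1 < d.1)
    (hc1 : cross a b c < 0) (hc2 : cross b c d < 0) :
    cross a b d < 0 ∧ cross a c d < 0 := by
  have k1 : (c.1 - b.1) * cross a b d
      = (b.1 - a.1) * cross b c d + (c.1 - b.1 + (d.1 - c.1)) * cross a b c := by
    unfold cross; ring
  have k2 : (c.1 - b.1) * cross a c d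
      = (b.1 - a.1 + (c.1 - b.1)) * cross b c d + (d.1 - c.1) * cross a b c := by
    unfold cross; ring
  constructor
  · nlinarith [mul_neg_of_pos_of_neg (show (0:ℝ) < b.1 - a.1 by linarith) hc2,
      mul_neg_of_pos_of_neg (show (0:ℝ) < c.1 - b.1 + (d.1 - c.1) by linarith) hc1]
  · nlinarith [mul_neg_of_pos_of_neg (show (0:ℝ) < b.1 - a.1 + (c.1 - b.1) by linarith) hc2,
      mul_neg_of_pos_of_neg (show (0:ℝ) < d.1 - c.1 by linarith) hc1]

lemma concave_all (n : ℕ) (q : ℕ → ℝ × ℝ)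
    (hx : ∀ i j, i < j → j < n → (q i).1 < (q j).1)
    (hc : ∀ i, i + 2 < n → cross (q i) (q (i + 1)) (q (i + 2)) < 0) :
    ∀ i j k, i < j → j < k → k < n → cross (q i) (q j) (q k) < 0 := by
  have main : ∀ d i j k, k - i ≤ d → i < j → j < k → k < n → cross (q i) (q j) (q k) < 0 := by
    intro d
    induction d with
    | zero => intro i j k hd hij hjk hk; omega
    | succ d ih =>
      intro i j k hd hij hjk hk
      rcases Nat.lt_or_ge (i + 2) k with hlt | hge
      · rcases Nat.lt_or_ge (i + 1) j with hj2 | hj1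
        · have h1 : cross (q i) (q (j - 1)) (q j) < 0 := by
            apply ih i (j - 1) j <;> omega
          have h2 : cross (q (j - 1)) (q j) (q k) < 0 := by
            apply ih (j - 1) j k <;> omega
          exact (chain4 (hx i (j-1) (by omega) (by omega)) (hx (j-1) j (by omega) (by omega))
            (hx j k hjk (by omega)) h1 h2).2
        · have hj : j = i + 1 := by omega
          subst hj
          have h1 : cross (q i) (q (i + 1)) (q (i + 2)) < 0 := by
            apply ih i (i+1) (i+2) <;> omega
          have h2 : cross (q (i + 1)) (q (i + 2)) (q k) < 0 := by
            apply ih (i+1) (i+2) k <;> omega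
          exact (chain4 (hx i (i+1) (by omega) (by omega)) (hx (i+1) (i+2) (by omega) (by omega))
            (hx (i+2) k (by omega) (by omega)) h1 h2).1
      · have hk2 : k = i + 2 := by omega
        have hj1 : j = i + 1 := by omega
        subst hk2; subst hj1
        exact hc i hk
  intro i j k hij hjk hk
  exact main (k - i) i j k le_rfl hij hjk hk

lemma cross_combo (P Q x y : ℝ × ℝ) {α β : ℝ} (h : α + β = 1) :
    cross P Q (α • x + β • y) = α * cross P Q x + β * cross P Q y := by
  have hβ : β = 1 - α := by linarith
  subst hβ
  simp only [cross, Prod.fst_add, Prod.snd_add, Prod.smul_fst, Prod.smul_snd, smul_eq_mul]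
  ring

lemma convex_crossle (P Q : ℝ × ℝ) : Convex ℝ {x : ℝ × ℝ | cross P Q x ≤ 0} := by
  intro x hx y hy α β hα hβ hαβ
  simp only [Set.mem_setOf_eq] at *
  rw [cross_combo P Q x y hαβ]
  have := mul_nonneg hα (neg_nonneg.2 hx)
  have := mul_nonneg hβ (neg_nonneg.2 hy)
  nlinarith

lemma key {P Q a w₁ w₂ t : ℝ × ℝ} (hPQ : P ≠ Q)
    (hdart : t ∈ interior (convexHull ℝ ({a, w₁, w₂} : Set (ℝ × ℝ))))
    (h1 : cross P Q a ≤ 0) (h2 : cross P Q w₁ ≤ 0) (h3 : cross P Q w₂ ≤ 0) :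
    cross P Q t < 0 := by
  have hsub : convexHull ℝ ({a, w₁, w₂} : Set (ℝ × ℝ)) ⊆ {x : ℝ × ℝ | cross P Q x ≤ 0} := by
    apply convexHull_min _ (convex_crossle P Q)
    rintro x (rfl | rfl | rfl) <;> assumption
  have ht2 : t ∈ interior {x : ℝ × ℝ | cross P Q x ≤ 0} := interior_mono hsub hdart
  have hle : cross P Q t ≤ 0 := by have := interior_subset ht2; simpa using this
  rcases lt_or_eq_of_le hle with h | h
  · exact h
  exfalso
  set v : ℝ × ℝ := (-(Q.2 - P.2), Q.1 - P.1) with hv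
  have hvne : v ≠ 0 := by
    intro hz
    apply hPQ
    have h1' : -(Q.2 - P.2) = 0 := congrArg Prod.fst hz
    have h2' : Q.1 - P.1 = 0 := congrArg Prod.snd hz
    exact Prod.ext (by linarith) (by linarith)
  have hvnorm : (0:ℝ) < ‖v‖ := norm_pos_iff.2 hvne
  obtain ⟨ε, hε, hball⟩ := Metric.mem_nhds_iff.1 (mem_interior_iff_mem_nhds.1 ht2)
  set c : ℝ := ε / (2 * ‖v‖) with hc
  have hcpos : 0 < c := by positivity
  have hmem : t + c • v ∈ Metric.ball t ε := by
    rw [Metric.mem_ball, dist_eq_norm, add_sub_cancel_left, norm_smul]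
    rw [Real.norm_eq_abs, abs_of_pos hcpos, hc]
    rw [div_mul_eq_mul_div, mul_comm, div_lt_iff₀ (by positivity : (0:ℝ) < 2 * ‖v‖)]
    nlinarith
  have hin : cross P Q (t + c • v) ≤ 0 := hball hmem
  have hval : cross P Q (t + c • v)
      = cross P Q t + c * ((Q.1 - P.1)^2 + (Q.2 - P.2)^2) := by
    simp only [cross, Prod.fst_add, Prod.snd_add, Prod.smul_fst, Prod.smul_snd, smul_eq_mul, hv]
    ring
  have hS : 0 < (Q.1 - P.1)^2 + (Q.2 - P.2)^2 := by
    rcases (em (Q.1 - P.1 = 0)) with h01 | h01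
    · have h02 : Q.2 - P.2 ≠ 0 := by
        intro h02; apply hPQ; exact (Prod.ext (by linarith) (by linarith))
      positivity
    · positivity
  nlinarith

lemma key_reflected {a w₁ w₂ t : ℝ × ℝ}
    (hdart : t ∈ interior (convexHull ℝ ({a, w₁, w₂} : Set (ℝ × ℝ)))) :
    ∀ P Q : ℝ × ℝ, P ≠ Q → cross P Q (a.1, -a.2) ≤ 0 → cross P Q (w₁.1, -w₁.2) ≤ 0 →
      cross P Q (w₂.1, -w₂.2) ≤ 0 → cross P Q (t.1, -t.2) < 0 := by
  intro P Q hne h1 h2 h3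
  set P' : ℝ × ℝ := (P.1, -P.2) with hP'
  set Q' : ℝ × ℝ := (Q.1, -Q.2) with hQ'
  have hPP : P = (P'.1, -P'.2) := by apply Prod.ext <;> simp [hP']
  have hQQ : Q = (Q'.1, -Q'.2) := by apply Prod.ext <;> simp [hQ']
  have hne' : Q' ≠ P' := by
    intro e
    apply hne
    rw [hQ', hP', Prod.mk.injEq] at e
    exact Prod.ext e.1.symm (by have := e.2; linarith)
  have trans : ∀ x : ℝ × ℝ, cross P Q (x.1, -x.2) = - cross P' Q' x := by
    intro x
    calc cross P Q (x.1, -x.2) = cross (P'.1, -P'.2) (Q'.1, -Q'.2) (x.1, -x.2) := by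
          rw [← hPP, ← hQQ]
      _ = - cross P' Q' x := cross_neg_y P' Q' x
  rw [trans] at h1 h2 h3 ⊢
  have k := key hne' hdart (show cross Q' P' a ≤ 0 by rw [cross_swap12]; linarith)
    (show cross Q' P' w₁ ≤ 0 by rw [cross_swap12]; linarith)
    (show cross Q' P' w₂ ≤ 0 by rw [cross_swap12]; linarith)
  rw [cross_swap12] at k
  linarith

section Core
variable {n : ℕ} {q : ℕ → ℝ × ℝ} {L : Set (ℝ × ℝ)}

lemma classify_above
    (hconc : ∀ i j k, i < j → j < k → k < n → cross (q i) (q j) (q k) < 0)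
    (hsep : ∀ i j w, i < j → j < n → w ∈ L → cross (q i) (q j) w < 0)
    {u v : ℕ} (huv : u < v) (hv : v < n) {w : ℝ × ℝ}
    (hw : (∃ l, l < n ∧ w = q l) ∨ w ∈ L)
    (hwu : w ≠ q u) (hwv : w ≠ q v)
    (habove : 0 < cross (q u) (q v) w) :
    ∃ m, u < m ∧ m < v ∧ w = q m := by
  rcases hw with ⟨l, hl, rfl⟩ | hL
  · have hlu : l ≠ u := fun e => hwu (by rw [e])
    have hlv : l ≠ v := fun e => hwv (by rw [e])
    refine ⟨l, ?_, ?_, rfl⟩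
    · rcases Nat.lt_or_ge u l with h' | h'
      · exact h'
      · exfalso
        have := hconc l u v (lt_of_le_of_ne h' hlu) huv hv
        rw [cross_cyclic] at this
        linarith
    · rcases Nat.lt_or_ge l v with h' | h'
      · exact h'
      · exfalso
        have := hconc u v l huv (lt_of_le_of_ne h' hlv.symm) hl
        linarith
  · exact absurd (hsep u v _ huv hv hL) (by linarith)

lemma classify_below
    (hconc : ∀ i j k, i < j → j < k → k < n → cross (q i) (q j) (q k) < 0)
    {u v : ℕ} (huv : u < v) (hv : v < n) {w : ℝ × ℝ}
    (hw : (∃ l, l < n ∧ w = q l) ∨ w ∈ L)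
    (hwu : w ≠ q u) (hwv : w ≠ q v)
    (hbelow : cross (q u) (q v) w ≤ 0) :
    (∃ l, l < n ∧ (l < u ∨ v < l) ∧ w = q l) ∨ w ∈ L := by
  rcases hw with ⟨l, hl, rfl⟩ | hL
  · left
    have hlu : l ≠ u := fun e => hwu (by rw [e])
    have hlv : l ≠ v := fun e => hwv (by rw [e])
    refine ⟨l, hl, ?_, rfl⟩
    by_contra h
    push_neg at h
    have := hconc u l v (lt_of_le_of_ne h.1 hlu.symm) (lt_of_le_of_ne h.2 hlv) hv
    rw [cross_swap] at hbelow
    linarith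
  · exact Or.inr hL

lemma core
    (hx : ∀ i j, i < j → j < n → (q i).1 < (q j).1)
    (hconc : ∀ i j k, i < j → j < k → k < n → cross (q i) (q j) (q k) < 0)
    (hsep : ∀ i j w, i < j → j < n → w ∈ L → cross (q i) (q j) w < 0)
    {u v : ℕ} (huv : u + 1 < v) (hv : v < n)
    {tip tail : ℝ × ℝ}
    (hcase : (tip = q u ∧ tail = q v) ∨ (tip = q v ∧ tail = q u))
    {wa wb : ℝ × ℝ}
    (hwau : wa ≠ q u) (hwav : wa ≠ q v) (hwbu : wb ≠ q u) (hwbv : wb ≠ q v)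
    (hwa : (∃ l, l < n ∧ wa = q l) ∨ wa ∈ L)
    (hwb : (∃ l, l < n ∧ wb = q l) ∨ wb ∈ L)
    (habove : 0 < cross (q u) (q v) wa)
    (hkey2 : ∀ P Q : ℝ × ℝ, P ≠ Q → cross P Q tip ≤ 0 → cross P Q wa ≤ 0 →
      cross P Q wb ≤ 0 → cross P Q tail < 0) :
    False := by
  have hu : u < n := by omega
  have huv' : u < v := by omega
  obtain ⟨m, hmu, hmv, hwam⟩ :=
    classify_above hconc hsep huv' hv hwa hwau hwav habove
  have hm : m < n := by omega
  rcases le_or_gt (cross (q u) (q v) wb) 0 with hwb_below | hwb_above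
  · have h3gen : ∀ s s' : ℕ, u ≤ s → s < s' → s' ≤ v → cross (q s) (q s') wb ≤ 0 := by
      intro s s' hs hss' hs'
      rcases classify_below hconc huv' hv hwb hwbu hwbv hwb_below with
        ⟨l, hl, hlout, rfl⟩ | hLb
      · rcases hlout with h' | h'
        · rw [show cross (q s) (q s') (q l) = cross (q l) (q s) (q s') from
            (cross_cyclic _ _ _).symm]
          exact le_of_lt (hconc l s s' (by omega) hss' (by omega))
        · exact le_of_lt (hconc s s' l hss' (by omega) hl)
      · exact le_of_lt (hsep s s' wb hss' (by omega) hLb)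
    rcases hcase with ⟨htip, htail⟩ | ⟨htip, htail⟩
    · have hPQ : q m ≠ q v := fun e => absurd (congrArg Prod.fst e) (ne_of_lt (hx m v hmv hv))
      have h1 : cross (q m) (q v) tip ≤ 0 := by
        rw [htip, show cross (q m) (q v) (q u) = cross (q u) (q m) (q v) from
          (cross_cyclic _ _ _).symm]
        exact le_of_lt (hconc u m v hmu hmv hv)
      have h2 : cross (q m) (q v) wa ≤ 0 := by rw [hwam, cross_self_mid]
      have h3 : cross (q m) (q v) wb ≤ 0 := h3gen m v (by omega) hmv le_rfl
      have := hkey2 (q m) (q v) hPQ h1 h2 h3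
      rw [htail, cross_self_right] at this
      linarith
    · have hPQ : q u ≠ q m := fun e => absurd (congrArg Prod.fst e) (ne_of_lt (hx u m hmu hm))
      have h1 : cross (q u) (q m) tip ≤ 0 := by
        rw [htip]; exact le_of_lt (hconc u m v hmu hmv hv)
      have h2 : cross (q u) (q m) wa ≤ 0 := by rw [hwam, cross_self_right]
      have h3 : cross (q u) (q m) wb ≤ 0 := h3gen u m le_rfl hmu (by omega)
      have := hkey2 (q u) (q m) hPQ h1 h2 h3
      rw [htail, cross_self_mid] at this
      linarith
  · obtain ⟨m', hm'u, hm'v, hwbm'⟩ :=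
      classify_above hconc hsep huv' hv hwb hwbu hwbv hwb_above
    rcases hcase with ⟨htip, htail⟩ | ⟨htip, htail⟩
    · have hPQ : (((q v).1, 1) : ℝ × ℝ) ≠ ((q v).1, 0) := by
        intro h; simpa using congrArg Prod.snd h
      have h1 : cross (((q v).1, 1) : ℝ × ℝ) ((q v).1, 0) tip ≤ 0 := by
        rw [cross_vert₂, htip]; have := hx u v huv' hv; linarith
      have h2 : cross (((q v).1, 1) : ℝ × ℝ) ((q v).1, 0) wa ≤ 0 := by
        rw [cross_vert₂, hwam]; have := hx m v hmv hv; linarith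
      have h3 : cross (((q v).1, 1) : ℝ × ℝ) ((q v).1, 0) wb ≤ 0 := by
        rw [cross_vert₂, hwbm']; have := hx m' v hm'v hv; linarith
      have := hkey2 _ _ hPQ h1 h2 h3
      rw [cross_vert₂, htail] at this
      linarith
    · have hPQ : (((q u).1, 0) : ℝ × ℝ) ≠ ((q u).1, 1) := by
        intro h; simpa using congrArg Prod.snd h
      have h1 : cross (((q u).1, 0) : ℝ × ℝ) ((q u).1, 1) tip ≤ 0 := by
        rw [cross_vert₁, htip]; have := hx u v huv' hv; linarith
      have h2 : cross (((q u).1, 0) : ℝ × ℝ) ((q u).1, 1) wa ≤ 0 := by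
        rw [cross_vert₁, hwam]; have := hx u m hmu hm; linarith
      have h3 : cross (((q u).1, 0) : ℝ × ℝ) ((q u).1, 1) wb ≤ 0 := by
        rw [cross_vert₁, hwbm']; have := hx u m' hm'u (by omega); linarith
      have := hkey2 _ _ hPQ h1 h2 h3
      rw [cross_vert₁, htail] at this
      linarith

lemma sameChain
    (hx : ∀ i j, i < j → j < n → (q i).1 < (q j).1)
    (hconc : ∀ i j k, i < j → j < k → k < n → cross (q i) (q j) (q k) < 0)
    (hsep : ∀ i j w, i < j → j < n → w ∈ L → cross (q i) (q j) w < 0)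
    {i j : ℕ} (hi : i < n) (hj : j < n) (hij : i ≠ j)
    {w₁ w₂ : ℝ × ℝ}
    (hw1i : w₁ ≠ q i) (hw1j : w₁ ≠ q j) (hw2i : w₂ ≠ q i) (hw2j : w₂ ≠ q j)
    (hw1 : (∃ l, l < n ∧ w₁ = q l) ∨ w₁ ∈ L)
    (hw2 : (∃ l, l < n ∧ w₂ = q l) ∨ w₂ ∈ L)
    (hkey : ∀ P Q : ℝ × ℝ, P ≠ Q → cross P Q (q i) ≤ 0 → cross P Q w₁ ≤ 0 →
      cross P Q w₂ ≤ 0 → cross P Q (q j) < 0) :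
    i = j + 1 ∨ j = i + 1 := by
  by_contra hcon
  push_neg at hcon
  rcases lt_or_gt_of_ne hij with hlt | hgt
  · have huv : i + 1 < j := by omega
    have hne : q i ≠ q j := fun e => absurd (congrArg Prod.fst e) (ne_of_lt (hx i j hlt hj))
    have habove : 0 < cross (q i) (q j) w₁ ∨ 0 < cross (q i) (q j) w₂ := by
      by_contra h
      push_neg at h
      have := hkey (q i) (q j) hne (le_of_eq (cross_self_mid _ _)) h.1 h.2
      rw [cross_self_right] at this
      linarith
    rcases habove with h | h
    · exact core hx hconc hsep huv hj (Or.inl ⟨rfl, rfl⟩) hw1i hw1j hw2i hw2j hw1 hw2 h hkey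
    · exact core hx hconc hsep huv hj (Or.inl ⟨rfl, rfl⟩) hw2i hw2j hw1i hw1j hw2 hw1 h
        (fun P Q hne h1 h2 h3 => hkey P Q hne h1 h3 h2)
  · have huv : j + 1 < i := by omega
    have hne : q j ≠ q i := fun e => absurd (congrArg Prod.fst e) (ne_of_lt (hx j i hgt hi))
    have habove : 0 < cross (q j) (q i) w₁ ∨ 0 < cross (q j) (q i) w₂ := by
      by_contra h
      push_neg at h
      have := hkey (q j) (q i) hne (le_of_eq (cross_self_right _ _)) h.1 h.2
      rw [cross_self_mid] at this
      linarith
    rcases habove with h | h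
    · exact core hx hconc hsep huv hi (Or.inr ⟨rfl, rfl⟩) hw1j hw1i hw2j hw2i hw1 hw2 h hkey
    · exact core hx hconc hsep huv hi (Or.inr ⟨rfl, rfl⟩) hw2j hw2i hw1j hw1i hw2 hw1 h
        (fun P Q hne h1 h2 h3 => hkey P Q hne h1 h3 h2)
end Core

/-- Dart dichotomy for a double chain.  `p₁` is the upper concave chain (cap
shaped: each interior point strictly above the segment of its neighbors) and
`p₂` the lower concave chain (cup shaped), and every point of each chain lies
strictly on the inner side of every line through two points of the other chain
(mutual visibility; the chains do not cross the diagonals).  If four distinct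
points of the double chain form an empty dart with tip `a` and tail `t` (so `t`
lies strictly inside the triangle on `a` and the wings `w₁, w₂`, and no other
point of the configuration lies in that triangle), then the spine `t a` connects
either two points on opposite chains, or two consecutive points of one chain. -/
theorem double_chain_dart_dichotomy
    (n₁ n₂ : ℕ) (p₁ p₂ : ℕ → ℝ × ℝ)
    (hx₁ : ∀ i j, i < j → j < n₁ → (p₁ i).1 < (p₁ j).1)
    (hx₂ : ∀ i j, i < j → j < n₂ → (p₂ i).1 < (p₂ j).1)
    (hconc₁ : ∀ i, i + 2 < n₁ → cross (p₁ i) (p₁ (i + 1)) (p₁ (i + 2)) < 0)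
    (hconc₂ : ∀ i, i + 2 < n₂ → 0 < cross (p₂ i) (p₂ (i + 1)) (p₂ (i + 2)))
    (hsep₁ : ∀ i j k, i < j → j < n₁ → k < n₂ → cross (p₁ i) (p₁ j) (p₂ k) < 0)
    (hsep₂ : ∀ i j k, i < j → j < n₂ → k < n₁ → 0 < cross (p₂ i) (p₂ j) (p₁ k))
    (P : Set (ℝ × ℝ))
    (hP : P = {x | (∃ i < n₁, x = p₁ i) ∨ (∃ j < n₂, x = p₂ j)})
    (a t w₁ w₂ : ℝ × ℝ)
    (ha : a ∈ P) (ht : t ∈ P) (hw₁ : w₁ ∈ P) (hw₂ : w₂ ∈ P)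
    (hdist : a ≠ t ∧ a ≠ w₁ ∧ a ≠ w₂ ∧ t ≠ w₁ ∧ t ≠ w₂ ∧ w₁ ≠ w₂)
    (hdart : t ∈ interior (convexHull ℝ ({a, w₁, w₂} : Set (ℝ × ℝ))))
    (hempty : ∀ x ∈ P, x ≠ a → x ≠ t → x ≠ w₁ → x ≠ w₂ →
      x ∉ convexHull ℝ ({a, w₁, w₂} : Set (ℝ × ℝ))) :
    ((∃ i < n₁, t = p₁ i) ∧ (∃ j < n₂, a = p₂ j)) ∨
    ((∃ j < n₂, t = p₂ j) ∧ (∃ i < n₁, a = p₁ i)) ∨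
    (∃ s, s + 1 < n₁ ∧ (({t, a} : Set (ℝ × ℝ)) = {p₁ s, p₁ (s + 1)})) ∨
    (∃ s, s + 1 < n₂ ∧ (({t, a} : Set (ℝ × ℝ)) = {p₂ s, p₂ (s + 1)})) := by
  obtain ⟨hat, haw1, haw2, htw1, htw2, hw12⟩ := hdist
  subst hP
  simp only [Set.mem_setOf_eq] at ha ht hw₁ hw₂
  rcases ht with ⟨tj, htj, htq⟩ | ⟨tj, htj, htq⟩ <;>
    rcases ha with ⟨ai, hai, haq⟩ | ⟨ai, hai, haq⟩
  · -- both on the upper chain p₁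
    have hconc := concave_all n₁ p₁ hx₁ hconc₁
    have hres : ai = tj + 1 ∨ tj = ai + 1 := by
      refine sameChain (L := {x : ℝ × ℝ | ∃ k, k < n₂ ∧ x = p₂ k}) hx₁ hconc
        (fun i j w hij hj hw => ?_) hai htj
        (fun e : ai = tj => hat (by rw [haq, htq, e]))
        (fun e => haw1 (haq.trans e.symm)) (fun e => htw1 (htq.trans e.symm))
        (fun e => haw2 (haq.trans e.symm)) (fun e => htw2 (htq.trans e.symm))
        ?_ ?_ ?_
      · obtain ⟨k, hk, rfl⟩ := hw
        exact hsep₁ i j k hij hj hk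
      · exact hw₁
      · exact hw₂
      · intro Pp Qq hne h1 h2 h3
        rw [← htq]
        exact key hne hdart (by rwa [← haq] at h1) h2 h3
    rcases hres with e | e
    · exact Or.inr (Or.inr (Or.inl ⟨tj, by omega, by rw [htq, haq, e]⟩))
    · exact Or.inr (Or.inr (Or.inl ⟨ai, by omega, by
        rw [htq, haq, e]; exact Set.pair_comm _ _⟩))
  · -- t on p₁, a on p₂
    exact Or.inl ⟨⟨tj, htj, htq⟩, ⟨ai, hai, haq⟩⟩
  · -- t on p₂, a on p₁
    exact Or.inr (Or.inl ⟨⟨tj, htj, htq⟩, ⟨ai, hai, haq⟩⟩)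
  · -- both on the lower chain p₂ : reflect
    set q : ℕ → ℝ × ℝ := fun k => ((p₂ k).1, -(p₂ k).2) with hqdef
    have hxq : ∀ i j, i < j → j < n₂ → (q i).1 < (q j).1 := fun i j hij hj => hx₂ i j hij hj
    have hconcq : ∀ i j k, i < j → j < k → k < n₂ → cross (q i) (q j) (q k) < 0 := by
      apply concave_all n₂ q hxq
      intro i h
      show cross ((p₂ i).1, -(p₂ i).2) ((p₂ (i+1)).1, -(p₂ (i+1)).2)
        ((p₂ (i+2)).1, -(p₂ (i+2)).2) < 0
      rw [cross_neg_y]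
      have := hconc₂ i h
      linarith
    have hrefl_inj : ∀ x y : ℝ × ℝ, (x.1, -x.2) = (y.1, -y.2) → x = y := by
      intro x y e
      rw [Prod.mk.injEq] at e
      exact Prod.ext e.1 (by have := e.2; linarith)
    have hres : ai = tj + 1 ∨ tj = ai + 1 := by
      refine sameChain (q := q) (L := {x : ℝ × ℝ | ∃ k, k < n₁ ∧ x = ((p₁ k).1, -(p₁ k).2)})
        hxq hconcq (fun i j w hij hj hw => ?_) hai htj
        (fun e : ai = tj => hat (by rw [haq, htq, e]))
        (i := ai) (j := tj) (w₁ := (w₁.1, -w₁.2)) (w₂ := (w₂.1, -w₂.2))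
        ?_ ?_ ?_ ?_ ?_ ?_ ?_
      · obtain ⟨k, hk, rfl⟩ := hw
        show cross ((p₂ i).1, -(p₂ i).2) ((p₂ j).1, -(p₂ j).2) ((p₁ k).1, -(p₁ k).2) < 0
        rw [cross_neg_y]
        have := hsep₂ i j k hij hj hk
        linarith
      · exact fun e => haw1 (haq.trans (hrefl_inj w₁ (p₂ ai) e).symm)
      · exact fun e => htw1 (htq.trans (hrefl_inj w₁ (p₂ tj) e).symm)
      · exact fun e => haw2 (haq.trans (hrefl_inj w₂ (p₂ ai) e).symm)
      · exact fun e => htw2 (htq.trans (hrefl_inj w₂ (p₂ tj) e).symm)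
      · rcases hw₁ with ⟨k, hk, e⟩ | ⟨k, hk, e⟩
        · exact Or.inr ⟨k, hk, by rw [e]⟩
        · exact Or.inl ⟨k, hk, by rw [e]⟩
      · rcases hw₂ with ⟨k, hk, e⟩ | ⟨k, hk, e⟩
        · exact Or.inr ⟨k, hk, by rw [e]⟩
        · exact Or.inl ⟨k, hk, by rw [e]⟩
      · intro Pp Qq hne h1 h2 h3
        have h1' : cross Pp Qq (a.1, -a.2) ≤ 0 := by rw [haq]; exact h1
        have goal : cross Pp Qq (t.1, -t.2) < 0 :=
          key_reflected hdart Pp Qq hne h1' h2 h3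
        rw [htq] at goal
        exact goal
    rcases hres with e | e
    · exact Or.inr (Or.inr (Or.inr ⟨tj, by omega, by rw [htq, haq, e]⟩))
    · exact Or.inr (Or.inr (Or.inr ⟨ai, by omega, by
        rw [htq, haq, e]; exact Set.pair_comm _ _⟩))
end

section
/- Let T be a triangle with vertices a, b, c and let d be a point in the interior of T. Then the three triangles abd, bcd, cad partition T, each of the angles of d in these triangles is less than π, and the reflex condition holds: d is a reflex vertex of the quadrilateral a b d c traversed in that order, i.e., the interior angle of the simple polygon a, b, d, c at d exceeds π. -/
/-!
Work in barycentric coordinates with respect to `a, b, c`, in which `d` has coordinates `μ` with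
all `μᵢ > 0`. A point with coordinates `λ` lies in the triangle formed by `d` and the two vertices
other than `i` as soon as `i` minimizes `λᵢ / μᵢ`; this gives the covering. Two of the small
triangles lie on opposite sides of the line through `d` and their common vertex (for `b d` this is
the line `μ₂ λ₀ = μ₀ λ₂`), so their interiors are disjoint. Finally `d` lies on no side line, so it
is never strictly between two vertices and each angle at `d` is less than `π`.
-/

open EuclideanGeometry Real Set Function

theorem AffineMap.surjective_of_apply_ne {k V P : Type*} [DivisionRing k] [AddCommGroup V]
    [Module k V] [AddTorsor V P] {g : P →ᵃ[k] k} {x y : P} (h : g x ≠ g y) : Surjective g := by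
  refine g.linear_surjective_iff.1 ((g.linear.surjective_or_eq_zero).resolve_right fun h0 => h ?_)
  rw [← sub_eq_zero, ← vsub_eq_sub, ← g.linearMap_vsub, h0]
  rfl

theorem EuclideanGeometry.angle_lt_pi_of_apply_eq_zero {V P : Type*} [NormedAddCommGroup V]
    [InnerProductSpace ℝ V] [MetricSpace P] [NormedAddTorsor V P] (f : P →ᵃ[ℝ] ℝ)
    {p₁ p₂ p : P} (h₁ : f p₁ = 0) (h₂ : f p₂ = 0) (hp : f p ≠ 0) : ∠ p₁ p p₂ < π := by
  refine (angle_le_pi _ _ _).lt_of_ne fun hπ => hp ?_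
  obtain ⟨t, -, rfl⟩ := (angle_eq_pi_iff_sbtw.1 hπ).wbtw
  simp [AffineMap.apply_lineMap, h₁, h₂]

theorem range_fin_three {α : Type*} (f : Fin 3 → α) : range f = {f 0, f 1, f 2} := by
  ext; simp [Fin.exists_fin_succ, eq_comm]

section Convex

variable {𝕜 E : Type*} [Field 𝕜] [LinearOrder 𝕜] [IsStrictOrderedRing 𝕜] [AddCommGroup E]
  [Module 𝕜 E]

theorem smul_add_smul_add_smul_mem_convexHull {a b c : E} {u v w : 𝕜} (hu : 0 ≤ u) (hv : 0 ≤ v)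
    (hw : 0 ≤ w) (huvw : u + v + w = 1) : u • a + v • b + w • c ∈ convexHull 𝕜 {a, b, c} := by
  have := (convex_convexHull 𝕜 ({a, b, c} : Set E)).sum_mem (t := Finset.univ)
    (w := ![u, v, w]) (z := ![a, b, c]) (by simp [Fin.forall_fin_succ, *])
    (by simp [Fin.sum_univ_three, huvw])
    (fun i _ => subset_convexHull 𝕜 _ (by fin_cases i <;> simp))
  simpa [Fin.sum_univ_three] using this

theorem mem_convexHull_of_div_le {a b c d x : E} {μa μb μc la lb lc : 𝕜}
    (hμa : 0 < μa) (hμb : 0 < μb) (hμc : 0 < μc) (hla : 0 ≤ la)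
    (hμ : μa + μb + μc = 1) (hl : la + lb + lc = 1)
    (hd : d = μa • a + μb • b + μc • c) (hx : x = la • a + lb • b + lc • c)
    (hb : la / μa ≤ lb / μb) (hc : la / μa ≤ lc / μc) : x ∈ convexHull 𝕜 {b, c, d} := by
  have hx' : x = (lb - la / μa * μb) • b + (lc - la / μa * μc) • c + (la / μa) • d := by
    rw [hx, hd]; match_scalars <;> field_simp <;> ring
  rw [hx']
  refine smul_add_smul_add_smul_mem_convexHull ?_ ?_ (div_nonneg hla hμa.le) ?_
  · rwa [sub_nonneg, ← le_div_iff₀ hμb]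
  · rwa [sub_nonneg, ← le_div_iff₀ hμc]
  · field_simp
    linear_combination μa * hl - la * hμ

end Convex

variable {E : Type*} [NormedAddCommGroup E] [NormedSpace ℝ E]

theorem disjoint_interior_of_subset_preimage_Ici_Iic [FiniteDimensional ℝ E]
    {g : E →ᵃ[ℝ] ℝ} (hg : Surjective g) {s t : Set E} (hs : s ⊆ g ⁻¹' Ici 0)
    (ht : t ⊆ g ⁻¹' Iic 0) : Disjoint (interior s) (interior t) := by
  have hopen : IsOpenMap g := AffineMap.isOpenMap_linear_iff.1 <|
    g.linear.isOpenMap_of_finiteDimensional (g.linear_surjective_iff.2 hg)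
  have hcont : Continuous g := g.continuous_of_finiteDimensional
  have hs' : interior s ⊆ g ⁻¹' Ioi 0 := by
    rw [← interior_Ici, hopen.preimage_interior_eq_interior_preimage hcont]
    exact interior_mono hs
  have ht' : interior t ⊆ g ⁻¹' Iio 0 := by
    rw [← interior_Iic, hopen.preimage_interior_eq_interior_preimage hcont]
    exact interior_mono ht
  exact (Ioi_disjoint_Iio_same.preimage g).mono hs' ht'

theorem exists_affineBasis_of_mem_interior {a b c d : E} (habc : ¬Collinear ℝ {a, b, c})
    (hd : d ∈ interior (convexHull ℝ {a, b, c})) :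
    ∃ T : AffineBasis (Fin 3) ℝ E, T 0 = a ∧ T 1 = b ∧ T 2 = c ∧ ∀ i, 0 < T.coord i d := by
  have hrange : range ![a, b, c] = {a, b, c} := range_fin_three _
  let T : AffineBasis (Fin 3) ℝ E := ⟨![a, b, c], affineIndependent_iff_not_collinear_set.2 habc,
    hrange ▸ affineSpan_eq_top_of_nonempty_interior ⟨d, hd⟩⟩
  have hdT : d ∈ interior (convexHull ℝ (range T)) := by rwa [show range T = {a, b, c} from hrange]
  rw [T.interior_convexHull] at hdT
  exact ⟨T, rfl, rfl, rfl, hdT⟩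

theorem convexHull_eq_union_of_mem_interior {a b c d : E} (habc : ¬Collinear ℝ {a, b, c})
    (hd : d ∈ interior (convexHull ℝ {a, b, c})) :
    convexHull ℝ {a, b, c} =
      convexHull ℝ {a, b, d} ∪ convexHull ℝ {b, c, d} ∪ convexHull ℝ {c, a, d} := by
  have hsub : ∀ p ∈ ({a, b, c} : Set E), ∀ q ∈ ({a, b, c} : Set E),
      convexHull ℝ {p, q, d} ⊆ convexHull ℝ {a, b, c} := fun p hp q hq =>
    convexHull_min (insert_subset (subset_convexHull ℝ _ hp) (insert_subset
      (subset_convexHull ℝ _ hq) (singleton_subset_iff.2 (interior_subset hd))))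
      (convex_convexHull ℝ _)
  refine Subset.antisymm ?_ (union_subset (union_subset (hsub a (by simp) b (by simp))
    (hsub b (by simp) c (by simp))) (hsub c (by simp) a (by simp)))
  obtain ⟨T, rfl, rfl, rfl, hT⟩ := exists_affineBasis_of_mem_interior habc hd
  have hcomb (y : E) : y = T.coord 0 y • T 0 + T.coord 1 y • T 1 + T.coord 2 y • T 2 := by
    simpa only [Fin.sum_univ_three] using (T.linear_combination_coord_eq_self y).symm
  have hsum (y : E) : T.coord 0 y + T.coord 1 y + T.coord 2 y = 1 := by
    simpa only [Fin.sum_univ_three] using T.sum_coord_apply_eq_one y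
  intro x hx
  rw [← range_fin_three, T.convexHull_eq_nonneg_coord] at hx
  obtain ⟨i, -, hi⟩ := Finset.univ.exists_min_image (fun i => T.coord i x / T.coord i d)
    Finset.univ_nonempty
  fin_cases i
  · exact Or.inl <| Or.inr <| mem_convexHull_of_div_le (hT 0) (hT 1) (hT 2) (hx 0)
      (hsum d) (hsum x) (hcomb d) (hcomb x) (hi 1 (by simp)) (hi 2 (by simp))
  · exact Or.inr <| mem_convexHull_of_div_le (hT 1) (hT 2) (hT 0) (hx 1)
      (by linear_combination hsum d) (by linear_combination hsum x) ((hcomb d).trans (by abel))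
      ((hcomb x).trans (by abel)) (hi 2 (by simp)) (hi 0 (by simp))
  · exact Or.inl <| Or.inl <| mem_convexHull_of_div_le (hT 2) (hT 0) (hT 1) (hx 2)
      (by linear_combination hsum d) (by linear_combination hsum x) ((hcomb d).trans (by abel))
      ((hcomb x).trans (by abel)) (hi 0 (by simp)) (hi 1 (by simp))

theorem disjoint_interior_convexHull_of_mem_interior {a b c d : E}
    (habc : ¬Collinear ℝ {a, b, c}) (hd : d ∈ interior (convexHull ℝ {a, b, c})) :
    Disjoint (interior (convexHull ℝ {a, b, d})) (interior (convexHull ℝ {b, c, d})) := by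
  obtain ⟨T, rfl, rfl, rfl, hT⟩ := exists_affineBasis_of_mem_interior habc hd
  have := T.finiteDimensional
  -- the barycentric equation of the line through `T 1` and `d`
  let g : E →ᵃ[ℝ] ℝ := T.coord 2 d • T.coord 0 - T.coord 0 d • T.coord 2
  have hg (y : E) : g y = T.coord 2 d * T.coord 0 y - T.coord 0 d * T.coord 2 y := rfl
  have hg0 : g (T 0) = T.coord 2 d := by simp [hg]
  have hg1 : g (T 1) = 0 := by simp [hg]
  have hg2 : g (T 2) = - T.coord 0 d := by simp [hg]
  have hgd : g d = 0 := by rw [hg]; ring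
  refine disjoint_interior_of_subset_preimage_Ici_Iic
    (g.surjective_of_apply_ne (x := T 0) (y := T 1) (by linarith [hT 2]))
    (convexHull_min ?_ ((convex_Ici 0).affine_preimage g))
    (convexHull_min ?_ ((convex_Iic 0).affine_preimage g))
  · simp [insert_subset_iff, hg0, hg1, hgd, (hT 2).le]
  · simp [insert_subset_iff, hg1, hg2, hgd, (hT 0).le]

theorem angle_lt_pi_of_mem_interior {V : Type*} [NormedAddCommGroup V] [InnerProductSpace ℝ V]
    {a b c d : V} (habc : ¬Collinear ℝ {a, b, c}) (hd : d ∈ interior (convexHull ℝ {a, b, c})) :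
    ∠ a d b < π := by
  obtain ⟨T, rfl, rfl, rfl, hT⟩ := exists_affineBasis_of_mem_interior habc hd
  exact angle_lt_pi_of_apply_eq_zero (T.coord 2) (T.coord_apply_ne (by decide))
    (T.coord_apply_ne (by decide)) (hT 2).ne'

/-- For `d` in the interior of triangle `abc`: the three triangles `abd`, `bcd`,
`cad` partition the triangle (their union is the triangle and their interiors are
pairwise disjoint), each of the angles at `d` in these triangles is less than `π`,
and the reflex condition holds: the interior angle at `d` of the simple polygon
`a b d c`, which equals `2π` minus the angle `b d c`, exceeds `π`. -/
theorem point_in_triangle_partition_and_reflex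
    (a b c d : EuclideanSpace ℝ (Fin 2))
    (habc : ¬ Collinear ℝ ({a, b, c} : Set (EuclideanSpace ℝ (Fin 2))))
    (hd : d ∈ interior (convexHull ℝ ({a, b, c} : Set (EuclideanSpace ℝ (Fin 2))))) :
    (convexHull ℝ ({a, b, c} : Set (EuclideanSpace ℝ (Fin 2))) =
        convexHull ℝ ({a, b, d} : Set (EuclideanSpace ℝ (Fin 2))) ∪
        convexHull ℝ ({b, c, d} : Set (EuclideanSpace ℝ (Fin 2))) ∪
        convexHull ℝ ({c, a, d} : Set (EuclideanSpace ℝ (Fin 2)))) ∧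
    (Disjoint (interior (convexHull ℝ ({a, b, d} : Set (EuclideanSpace ℝ (Fin 2)))))
        (interior (convexHull ℝ ({b, c, d} : Set (EuclideanSpace ℝ (Fin 2))))) ∧
      Disjoint (interior (convexHull ℝ ({b, c, d} : Set (EuclideanSpace ℝ (Fin 2)))))
        (interior (convexHull ℝ ({c, a, d} : Set (EuclideanSpace ℝ (Fin 2))))) ∧
      Disjoint (interior (convexHull ℝ ({a, b, d} : Set (EuclideanSpace ℝ (Fin 2)))))
        (interior (convexHull ℝ ({c, a, d} : Set (EuclideanSpace ℝ (Fin 2)))))) ∧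
    (∠ a d b < π ∧ ∠ b d c < π ∧ ∠ c d a < π) ∧
    π < 2 * π - ∠ b d c := by
  have hbca : ¬Collinear ℝ {b, c, a} := by rwa [pair_comm, insert_comm]
  have hcab : ¬Collinear ℝ {c, a, b} := by rwa [insert_comm, pair_comm]
  have hd_bca : d ∈ interior (convexHull ℝ {b, c, a}) := by rwa [pair_comm, insert_comm]
  have hd_cab : d ∈ interior (convexHull ℝ {c, a, b}) := by rwa [insert_comm, pair_comm]
  refine ⟨convexHull_eq_union_of_mem_interior habc hd,
    ⟨disjoint_interior_convexHull_of_mem_interior habc hd,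
      disjoint_interior_convexHull_of_mem_interior hbca hd_bca,
      (disjoint_interior_convexHull_of_mem_interior hcab hd_cab).symm⟩,
    ⟨angle_lt_pi_of_mem_interior habc hd, angle_lt_pi_of_mem_interior hbca hd_bca,
      angle_lt_pi_of_mem_interior hcab hd_cab⟩, ?_⟩
  linarith [angle_lt_pi_of_mem_interior hbca hd_bca]
end
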